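/- arXiv:2603.24974 — 4 statements merged into one kernel-verified Lean document; each statement's English description precedes it below -/
import Mathlib

section
/- Let B be an n×n real matrix such that B + Bᵀ is negative definite, and let α ∈ ℝⁿ. Then the demand-space revenue function d ↦ ⟨d, B⁻¹(d − α)⟩ is strictly concave on ℝⁿ. -/
/-!
Since `x ⬝ᵥ Bᵀ *ᵥ x = x ⬝ᵥ B *ᵥ x`, the hypothesis says that the quadratic form of `B` is
negative definite. Such a `B` has trivial kernel, and substituting `z = B y` shows that the
quadratic form of `B⁻¹` is negative definite as well. The revenue function is this quadratic
form minus a linear function, and a negative definite quadratic form `q` is strictly concave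
because `q (a • x + b • y) = a * q x + b * q y - a * b * q (x - y)` whenever `a + b = 1`.
-/

open Matrix

namespace Matrix

variable {ι 𝕜 : Type*} [Fintype ι]

theorem dotProduct_mulVec_self_add_transpose {R : Type*} [CommSemiring R] (A : Matrix ι ι R)
    (x : ι → R) : x ⬝ᵥ (A + Aᵀ) *ᵥ x = 2 * (x ⬝ᵥ A *ᵥ x) := by
  rw [add_mulVec, dotProduct_add, dotProduct_transpose_mulVec, two_mul]

theorem dotProduct_smul_add_smul_mulVec {R : Type*} [CommRing R] (A : Matrix ι ι R)
    (x y : ι → R) {a b : R} (hab : a + b = 1) :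
    (a • x + b • y) ⬝ᵥ A *ᵥ (a • x + b • y) =
      a * (x ⬝ᵥ A *ᵥ x) + b * (y ⬝ᵥ A *ᵥ y) - a * b * ((x - y) ⬝ᵥ A *ᵥ (x - y)) := by
  obtain rfl : b = 1 - a := eq_sub_of_add_eq' hab
  simp only [mulVec_add, mulVec_sub, mulVec_smul, dotProduct_add, dotProduct_sub,
    add_dotProduct, sub_dotProduct, dotProduct_smul, smul_dotProduct, smul_eq_mul]
  ring

variable [Field 𝕜]

theorem isUnit_det_of_dotProduct_mulVec_self_ne_zero [DecidableEq ι] {A : Matrix ι ι 𝕜}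
    (hA : ∀ x, x ≠ 0 → x ⬝ᵥ A *ᵥ x ≠ 0) : IsUnit A.det := by
  refine isUnit_iff_ne_zero.mpr fun hdet => ?_
  obtain ⟨x, hx, hAx⟩ := exists_mulVec_eq_zero_iff.mpr hdet
  exact hA x hx (by rw [hAx, dotProduct_zero])

variable [LinearOrder 𝕜]

theorem dotProduct_inv_mulVec_self_neg [DecidableEq ι] {A : Matrix ι ι 𝕜}
    (hA : ∀ x, x ≠ 0 → x ⬝ᵥ A *ᵥ x < 0) {z : ι → 𝕜} (hz : z ≠ 0) :
    z ⬝ᵥ A⁻¹ *ᵥ z < 0 := by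
  have hdet := isUnit_det_of_dotProduct_mulVec_self_ne_zero fun x hx => (hA x hx).ne
  set y := A⁻¹ *ᵥ z
  have hzy : z = A *ᵥ y := by rw [mulVec_mulVec, mul_nonsing_inv A hdet, one_mulVec]
  have hy : y ≠ 0 := by rintro hy; exact hz (by rw [hzy, hy, mulVec_zero])
  calc z ⬝ᵥ y = y ⬝ᵥ A *ᵥ y := by rw [dotProduct_comm, ← hzy]
    _ < 0 := hA y hy

variable [IsStrictOrderedRing 𝕜]

theorem strictConcaveOn_dotProduct_mulVec_self {A : Matrix ι ι 𝕜}
    (hA : ∀ x, x ≠ 0 → x ⬝ᵥ A *ᵥ x < 0) :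
    StrictConcaveOn 𝕜 Set.univ fun x : ι → 𝕜 => x ⬝ᵥ A *ᵥ x := by
  refine ⟨convex_univ, fun x _ y _ hxy a b ha hb hab => ?_⟩
  have hq : a * b * ((x - y) ⬝ᵥ A *ᵥ (x - y)) < 0 :=
    mul_neg_of_pos_of_neg (mul_pos ha hb) (hA _ (sub_ne_zero.mpr hxy))
  simp only [smul_eq_mul, dotProduct_smul_add_smul_mulVec A x y hab]
  linarith

theorem strictConcaveOn_dotProduct_mulVec_sub {A : Matrix ι ι 𝕜}
    (hA : ∀ x, x ≠ 0 → x ⬝ᵥ A *ᵥ x < 0) (α : ι → 𝕜) :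
    StrictConcaveOn 𝕜 Set.univ fun d : ι → 𝕜 => d ⬝ᵥ A *ᵥ (d - α) := by
  have hlin : ConvexOn 𝕜 Set.univ fun d : ι → 𝕜 => d ⬝ᵥ A *ᵥ α :=
    ((dotProductBilin 𝕜 𝕜).flip (A *ᵥ α)).convexOn convex_univ
  refine ((strictConcaveOn_dotProduct_mulVec_self hA).sub_convexOn hlin).congr fun d _ => ?_
  rw [Pi.sub_apply, mulVec_sub, dotProduct_sub]

end Matrix

/-- If `B + Bᵀ` is negative definite then the demand-space revenue function
`d ↦ ⟨d, B⁻¹(d − α)⟩` is strictly concave on `ℝⁿ`. -/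
theorem stmt3 {n : ℕ} (B : Matrix (Fin n) (Fin n) ℝ) (α : Fin n → ℝ)
    (hB : ∀ x : Fin n → ℝ, x ≠ 0 → x ⬝ᵥ (B + Bᵀ).mulVec x < 0) :
    StrictConcaveOn ℝ (Set.univ : Set (Fin n → ℝ))
      (fun d => d ⬝ᵥ B⁻¹.mulVec (d - α)) := by
  have hneg : ∀ x, x ≠ 0 → x ⬝ᵥ B *ᵥ x < 0 := fun x hx => by
    linarith [dotProduct_mulVec_self_add_transpose B x ▸ hB x hx]
  exact strictConcaveOn_dotProduct_mulVec_sub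
    (fun z hz => dotProduct_inv_mulVec_self_neg hneg hz) α
end

section
/- Let B be an n×n real matrix with B + Bᵀ negative semidefinite, α ∈ ℝⁿ, and define the affine demand function f(p) = α + Bp. Let A be an m×n real matrix, c ∈ ℝᵐ, T a positive integer, and let p¹, …, p^T be points of the box [L,U]ⁿ (componentwise L ≤ pᵗᵢ ≤ U) whose total consumption satisfies Σ_{t=1}^T A f(pᵗ) ≤ c componentwise. Then the average price p̄ = (1/T) Σ_{t=1}^T pᵗ lies in [L,U]ⁿ, satisfies A f(p̄) ≤ c/T componentwise, and the total revenue satisfies Σ_{t=1}^T ⟨pᵗ, f(pᵗ)⟩ ≤ T · ⟨p̄, f(p̄)⟩. In particular, the total revenue of any deterministic price sequence respecting the capacity budget is at most the fluid optimum T · sup{⟨p, f(p)⟩ : p ∈ [L,U]ⁿ, A f(p) ≤ c/T}. -/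
/-!
The revenue `p ↦ ⟨p, α + B p⟩` is concave: its quadratic part `⟨x, B x⟩ = ½ ⟨x, (B + Bᵀ) x⟩`
is nonpositive. Jensen's inequality for the uniform weights `1/T` therefore bounds the total
revenue by `T` times the revenue at the average price. The box is convex and the consumption
`p ↦ A (α + B p)` is affine, so the average price stays in the box and consumes `1/T` of the
total consumption, hence at most `c / T`.
-/

open Matrix Finset

section Average

variable {ι E : Type*} [AddCommGroup E] [Module ℝ E] {s : Finset ι} {p : ι → E}

theorem Convex.inv_card_smul_sum_mem {S : Set E} (hS : Convex ℝ S) (hs : s.Nonempty)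
    (hp : ∀ i ∈ s, p i ∈ S) : (#s : ℝ)⁻¹ • ∑ i ∈ s, p i ∈ S := by
  rw [smul_sum]
  exact hS.sum_mem (fun _ _ => by positivity) (by simp [hs.card_ne_zero]) hp

theorem ConcaveOn.sum_le_card_mul_map_inv_card_smul_sum {S : Set E} {g : E → ℝ}
    (hg : ConcaveOn ℝ S g) (hs : s.Nonempty) (hp : ∀ i ∈ s, p i ∈ S) :
    ∑ i ∈ s, g (p i) ≤ #s * g ((#s : ℝ)⁻¹ • ∑ i ∈ s, p i) := by
  have hjensen := hg.le_map_sum (w := fun _ => (#s : ℝ)⁻¹) (fun _ _ => by positivity)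
    (by simp [hs.card_ne_zero]) hp
  rw [← smul_sum, ← smul_sum, smul_eq_mul] at hjensen
  have hcard : (0 : ℝ) < #s := by exact_mod_cast hs.card_pos
  rwa [inv_mul_le_iff₀ hcard] at hjensen

end Average

namespace Matrix

variable {𝕜 ι κ : Type*} [Fintype ι]

theorem dotProduct_add_transpose_mulVec_self [CommRing 𝕜] (B : Matrix ι ι 𝕜) (x : ι → 𝕜) :
    x ⬝ᵥ (B + Bᵀ) *ᵥ x = 2 * (x ⬝ᵥ B *ᵥ x) := by
  rw [add_mulVec, dotProduct_add, dotProduct_mulVec x Bᵀ, vecMul_transpose, dotProduct_comm]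
  ring

theorem concaveOn_dotProduct_add_mulVec [Field 𝕜] [LinearOrder 𝕜] [IsStrictOrderedRing 𝕜]
    {B : Matrix ι ι 𝕜} (hB : ∀ x, x ⬝ᵥ (B + Bᵀ) *ᵥ x ≤ 0) (α : ι → 𝕜) :
    ConcaveOn 𝕜 Set.univ fun p => p ⬝ᵥ (α + B *ᵥ p) := by
  refine ⟨convex_univ, fun x _ y _ a b ha hb hab => ?_⟩
  have hdiff : (x - y) ⬝ᵥ B *ᵥ (x - y) ≤ 0 := by
    have := hB (x - y)
    rw [dotProduct_add_transpose_mulVec_self] at this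
    linarith
  -- `a g x + b g y = g (a x + b y) + a b ⟨x - y, B (x - y)⟩` when `a + b = 1`
  have hab' : b = 1 - a := by linarith
  subst hab'
  simp only [smul_eq_mul, mulVec_add, mulVec_smul, mulVec_sub, dotProduct_add, add_dotProduct,
    smul_dotProduct, dotProduct_smul, dotProduct_sub, sub_dotProduct] at hdiff ⊢
  nlinarith [mul_nonneg ha hb]

theorem mulVec_add_mulVec_inv_card_smul_sum [Field 𝕜] [CharZero 𝕜] [Fintype κ] {τ : Type*}
    {s : Finset τ} (hs : s.Nonempty) (A : Matrix κ ι 𝕜) (α : ι → 𝕜) (B : Matrix ι ι 𝕜)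
    (p : τ → ι → 𝕜) :
    A *ᵥ (α + B *ᵥ ((#s : 𝕜)⁻¹ • ∑ t ∈ s, p t)) =
      (#s : 𝕜)⁻¹ • ∑ t ∈ s, A *ᵥ (α + B *ᵥ p t) := by
  have hcard : (#s : 𝕜) ≠ 0 := by exact_mod_cast hs.card_ne_zero
  rw [← mulVec_sum, ← mulVec_smul, sum_add_distrib, sum_const, ← mulVec_sum, smul_add,
    ← Nat.cast_smul_eq_nsmul 𝕜, smul_smul, inv_mul_cancel₀ hcard, one_smul, mulVec_smul]

end Matrix

/-- **Fluid benchmark upper bound.** With concave revenue (`B + Bᵀ` negative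
semidefinite) and affine demand `f(p) = α + Bp`, any price sequence in the box
`[L,U]ⁿ` whose total consumption respects the capacity `c` has average price
`p̄` feasible for the fluid problem, and total revenue at most `T·⟨p̄, f(p̄)⟩`,
hence at most `T` times the fluid optimum. -/
theorem stmt5 {n m T : ℕ} (hT : 0 < T)
    (B : Matrix (Fin n) (Fin n) ℝ) (α : Fin n → ℝ)
    (hB : ∀ x : Fin n → ℝ, x ⬝ᵥ (B + Bᵀ).mulVec x ≤ 0)
    (A : Matrix (Fin m) (Fin n) ℝ) (c : Fin m → ℝ) (L U : ℝ)
    (p : Fin T → Fin n → ℝ)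
    (hbox : ∀ t i, L ≤ p t i ∧ p t i ≤ U)
    (hcap : ∀ j, ∑ t, A.mulVec (α + B.mulVec (p t)) j ≤ c j) :
    (∀ i, L ≤ ((T : ℝ)⁻¹ • ∑ t, p t) i ∧ ((T : ℝ)⁻¹ • ∑ t, p t) i ≤ U) ∧
    (∀ j, A.mulVec (α + B.mulVec ((T : ℝ)⁻¹ • ∑ t, p t)) j ≤ c j / T) ∧
    (∑ t, p t ⬝ᵥ (α + B.mulVec (p t)) ≤
      T * (((T : ℝ)⁻¹ • ∑ t, p t) ⬝ᵥ (α + B.mulVec ((T : ℝ)⁻¹ • ∑ t, p t)))) ∧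
    (∑ t, p t ⬝ᵥ (α + B.mulVec (p t)) ≤
      T * sSup {r : ℝ | ∃ q : Fin n → ℝ, (∀ i, L ≤ q i ∧ q i ≤ U) ∧
        (∀ j, A.mulVec (α + B.mulVec q) j ≤ c j / T) ∧
        r = q ⬝ᵥ (α + B.mulVec q)}) := by
  have hne : (univ : Finset (Fin T)).Nonempty := univ_nonempty_iff.mpr ⟨⟨0, hT⟩⟩
  have hcard : #(univ : Finset (Fin T)) = T := card_fin T
  set pbar : Fin n → ℝ := (T : ℝ)⁻¹ • ∑ t, p t
  have hbox_avg : ∀ i, L ≤ pbar i ∧ pbar i ≤ U := by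
    have := (convex_Icc (fun _ : Fin n => L) fun _ => U).inv_card_smul_sum_mem hne
      fun t _ => ⟨fun i => (hbox t i).1, fun i => (hbox t i).2⟩
    rw [hcard] at this
    exact fun i => ⟨this.1 i, this.2 i⟩
  have hfeas : ∀ j, (A *ᵥ (α + B *ᵥ pbar)) j ≤ c j / T := by
    intro j
    have := mulVec_add_mulVec_inv_card_smul_sum hne A α B p
    rw [hcard] at this
    rw [this, Pi.smul_apply, Finset.sum_apply, smul_eq_mul, div_eq_inv_mul]
    exact mul_le_mul_of_nonneg_left (hcap j) (by positivity)
  have hrev : ∑ t, p t ⬝ᵥ (α + B *ᵥ p t) ≤ T * (pbar ⬝ᵥ (α + B *ᵥ pbar)) := by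
    have := (concaveOn_dotProduct_add_mulVec hB α).sum_le_card_mul_map_inv_card_smul_sum hne
      fun t _ => Set.mem_univ (p t)
    rwa [hcard] at this
  have hbdd : BddAbove {r : ℝ | ∃ q : Fin n → ℝ, (∀ i, L ≤ q i ∧ q i ≤ U) ∧
      (∀ j, (A *ᵥ (α + B *ᵥ q)) j ≤ c j / T) ∧ r = q ⬝ᵥ (α + B *ᵥ q)} := by
    refine ((isCompact_Icc (a := fun _ : Fin n => L) (b := fun _ => U)).bddAbove_image
      (f := fun q => q ⬝ᵥ (α + B *ᵥ q)) (by fun_prop)).mono ?_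
    rintro _ ⟨q, hq, -, rfl⟩
    exact ⟨q, ⟨fun i => (hq i).1, fun i => (hq i).2⟩, rfl⟩
  refine ⟨hbox_avg, hfeas, hrev, hrev.trans ?_⟩
  exact mul_le_mul_of_nonneg_left (le_csSup hbdd ⟨pbar, hbox_avg, hfeas, rfl⟩) (by positivity)
end

section
/- Let n ≥ 2 be an integer, σ > 0, and let ε₁, …, εₙ be real random variables on a probability space, each σ²-sub-Gaussian in the sense that E[exp(t εᵢ)] ≤ exp(σ² t²/2) for all t ∈ ℝ. Let s ≥ 1 be an integer and let ζ ≥ 4σ√(log n). Then P(∃ i ∈ {1,…,n} : εᵢ / s > ζ / √(s+1)) ≤ n^{1 − 2s}. -/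
/-!
A union bound reduces the claim to the Chernoff tail bound
`P(εᵢ ≥ a) ≤ exp(-a² / 2σ²)` at level `a = s ζ / √(s+1)`. Since `s² / (s+1) ≥ s / 2`
and `ζ² ≥ 16 σ² log n`, the exponent is at least `2 s log n`, so the `n` terms add up to
at most `n · n^(-2s)`.
-/

open MeasureTheory ProbabilityTheory Real

open scoped NNReal

section SubGaussian

variable {Ω : Type*} [MeasurableSpace Ω] {μ : Measure Ω}

lemma hasSubgaussianMGF_of_lintegral_exp_le {X : Ω → ℝ} (hX : AEMeasurable X μ) {c : ℝ≥0}
    (h : ∀ t : ℝ,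
      ∫⁻ ω, ENNReal.ofReal (exp (t * X ω)) ∂μ ≤ ENNReal.ofReal (exp (c * t ^ 2 / 2))) :
    HasSubgaussianMGF X c μ := by
  have hpos (t : ℝ) : 0 ≤ᵐ[μ] fun ω ↦ exp (t * X ω) :=
    .of_forall fun ω ↦ (exp_pos _).le
  have hmeas (t : ℝ) : AEStronglyMeasurable (fun ω ↦ exp (t * X ω)) μ :=
    (hX.const_mul t).exp.aestronglyMeasurable
  refine ⟨fun t ↦ ⟨hmeas t, ?_⟩, fun t ↦ ?_⟩
  · rw [hasFiniteIntegral_iff_ofReal (hpos t)]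
    exact (h t).trans_lt ENNReal.ofReal_lt_top
  · rw [mgf, integral_eq_lintegral_of_nonneg_ae (hpos t) (hmeas t)]
    exact ENNReal.toReal_le_of_le_ofReal (exp_pos _).le (h t)

lemma measure_exists_ge_le_of_hasSubgaussianMGF [IsFiniteMeasure μ] {ι : Type*}
    [Fintype ι] {X : ι → Ω → ℝ} {c : ℝ≥0} (hX : ∀ i, HasSubgaussianMGF (X i) c μ)
    {a : ℝ} (ha : 0 ≤ a) :
    μ {ω | ∃ i, a ≤ X i ω} ≤
      ENNReal.ofReal (Fintype.card ι * exp (-a ^ 2 / (2 * c))) := by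
  rw [← ofReal_measureReal]
  gcongr
  calc μ.real {ω | ∃ i, a ≤ X i ω} = μ.real (⋃ i, {ω | a ≤ X i ω}) := by
        rw [Set.ofPred_exists]
    _ ≤ ∑ i, μ.real {ω | a ≤ X i ω} := measureReal_iUnion_fintype_le _
    _ ≤ ∑ _i : ι, exp (-a ^ 2 / (2 * c)) :=
        Finset.sum_le_sum fun i _ ↦ (hX i).measure_ge_le ha
    _ = Fintype.card ι * exp (-a ^ 2 / (2 * c)) := by simp

end SubGaussian

lemma half_le_sq_div_add_one {s : ℝ} (hs : 1 ≤ s) : s / 2 ≤ s ^ 2 / (s + 1) := by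
  rw [div_le_div_iff₀ two_pos (by linarith)]
  nlinarith

lemma mul_exp_neg_mul_log_eq_rpow {x k : ℝ} (hx : 0 ≤ x) (hk : k ≠ 1) :
    x * exp (-(k * log x)) = x ^ (1 - k) := by
  rcases hx.eq_or_lt with rfl | hx
  · rw [zero_rpow (sub_ne_zero.2 hk.symm), zero_mul]
  · rw [rpow_def_of_pos hx, mul_sub, mul_one, exp_sub, exp_log hx, div_eq_mul_inv, ← exp_neg,
      mul_comm (log x)]

lemma two_mul_log_le_sq_div {σ ζ s L : ℝ} (hσ : 0 < σ) (hL : 0 ≤ L) (hs : 1 ≤ s)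
    (hζ : 4 * σ * √L ≤ ζ) : 2 * s * L ≤ (s * ζ / √(s + 1)) ^ 2 / (2 * σ ^ 2) := by
  have hζ2 : 16 * σ ^ 2 * L ≤ ζ ^ 2 := by
    have := pow_le_pow_left₀ (by positivity) hζ 2
    rw [mul_pow, mul_pow, sq_sqrt hL] at this
    linarith
  rw [le_div_iff₀ (by positivity), div_pow, mul_pow, sq_sqrt (by linarith)]
  calc 2 * s * L * (2 * σ ^ 2) = s / 2 * (8 * σ ^ 2 * L) := by ring
    _ ≤ s ^ 2 / (s + 1) * ζ ^ 2 := by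
      have : 0 ≤ σ ^ 2 * L := by positivity
      exact mul_le_mul (half_le_sq_div_add_one hs) (by linarith) (by positivity) (by positivity)
    _ = s ^ 2 * ζ ^ 2 / (s + 1) := by ring

theorem stmt7_general {Ω : Type*} [MeasurableSpace Ω] (μ : Measure Ω)
    [IsProbabilityMeasure μ]
    {n : ℕ} (ε : Fin n → Ω → ℝ) (hmeas : ∀ i, Measurable (ε i))
    (σ : ℝ) (hσ : 0 < σ)
    (hsub : ∀ i, ∀ t : ℝ,
      ∫⁻ ω, ENNReal.ofReal (Real.exp (t * ε i ω)) ∂μ ≤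
        ENNReal.ofReal (Real.exp (σ ^ 2 * t ^ 2 / 2)))
    (s : ℕ) (hs : 1 ≤ s) (ζ : ℝ) (hζ : 4 * σ * Real.sqrt (Real.log n) ≤ ζ) :
    μ {ω | ∃ i, ζ / Real.sqrt ((s : ℝ) + 1) < ε i ω / s} ≤
      ENNReal.ofReal ((n : ℝ) ^ (1 - 2 * (s : ℝ))) := by
  have hs1 : (1 : ℝ) ≤ s := by exact_mod_cast hs
  have hζ0 : 0 ≤ ζ := le_trans (by positivity) hζ
  set a := s * ζ / √((s : ℝ) + 1)
  have hsubset :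
      {ω | ∃ i, ζ / √((s : ℝ) + 1) < ε i ω / s} ⊆ {ω | ∃ i, a ≤ ε i ω} := by
    rintro ω ⟨i, hi⟩
    refine ⟨i, le_of_lt ?_⟩
    rwa [lt_div_iff₀ (by linarith), mul_comm, ← mul_div_assoc] at hi
  have hsubG (i : Fin n) : HasSubgaussianMGF (ε i) ⟨σ ^ 2, sq_nonneg σ⟩ μ :=
    hasSubgaussianMGF_of_lintegral_exp_le (hmeas i).aemeasurable (hsub i)
  have hexp : -a ^ 2 / (2 * σ ^ 2) ≤ -(2 * s * log n) := by
    rw [neg_div, neg_le_neg_iff]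
    exact two_mul_log_le_sq_div hσ (log_natCast_nonneg n) hs1 hζ
  calc μ {ω | ∃ i, ζ / √((s : ℝ) + 1) < ε i ω / s}
      ≤ μ {ω | ∃ i, a ≤ ε i ω} := measure_mono hsubset
    _ ≤ ENNReal.ofReal (n * exp (-a ^ 2 / (2 * σ ^ 2))) := by
      have := measure_exists_ge_le_of_hasSubgaussianMGF hsubG (by positivity : 0 ≤ a)
      rwa [Fintype.card_fin] at this
    _ ≤ ENNReal.ofReal (n * exp (-(2 * s * log n))) := by gcongr
    _ = ENNReal.ofReal ((n : ℝ) ^ (1 - 2 * (s : ℝ))) := by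
      rw [mul_exp_neg_mul_log_eq_rpow n.cast_nonneg (by linarith)]

/-- **Boundary-attraction constraint-violation bound.** For `n ≥ 2`,
`σ²`-sub-Gaussian noises `ε₁, …, εₙ`, an integer `s ≥ 1`, and threshold
`ζ ≥ 4σ√(log n)`, the probability that some `εᵢ/s` exceeds `ζ/√(s+1)` is at
most `n^(1−2s)`. -/
theorem stmt7 {Ω : Type*} [MeasurableSpace Ω] (μ : Measure Ω)
    [IsProbabilityMeasure μ]
    {n : ℕ} (hn : 2 ≤ n) (ε : Fin n → Ω → ℝ) (hmeas : ∀ i, Measurable (ε i))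
    (σ : ℝ) (hσ : 0 < σ)
    (hsub : ∀ i, ∀ t : ℝ,
      ∫⁻ ω, ENNReal.ofReal (Real.exp (t * ε i ω)) ∂μ ≤
        ENNReal.ofReal (Real.exp (σ ^ 2 * t ^ 2 / 2)))
    (s : ℕ) (hs : 1 ≤ s) (ζ : ℝ) (hζ : 4 * σ * Real.sqrt (Real.log n) ≤ ζ) :
    μ {ω | ∃ i, ζ / Real.sqrt ((s : ℝ) + 1) < ε i ω / s} ≤
      ENNReal.ofReal ((n : ℝ) ^ (1 - 2 * (s : ℝ))) :=
  stmt7_general μ ε hmeas σ hσ hsub s hs ζ hζ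
end

section
/- Let B be an invertible n×n real matrix, α ∈ ℝⁿ, and define r(d) = ⟨d, B⁻¹(d − α)⟩. For every integer m ≥ 1 and every d ∈ ℝⁿ, the exact identity (m+1)·r(d) − m·r(((m+1)/m)·d) = −((m+1)/m)·⟨d, B⁻¹ d⟩ holds. Consequently, if ζ ≥ 0 and ‖d‖_∞ ≤ ζ/√(m+1), then (m+1)·r(d) − m·r(((m+1)/m)·d) ≤ 2 n ζ² ‖B⁻¹‖₂ / (m+1). -/
/-!
With `r(d) = ⟨d, A(d - α)⟩` one has `r(c • d) = c² ⟨d, Ad⟩ - c ⟨d, Aα⟩`; for `c = (m + 1) / m` the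
terms linear in `d` cancel in `(m + 1) r(d) - m r(c • d)` because `m c = m + 1`, leaving
`-c ⟨d, Ad⟩`. Cauchy–Schwarz gives `|⟨d, Ad⟩| ≤ ‖A‖₂ ‖d‖²`, and the coordinate bound gives
`‖d‖² ≤ n ζ² / (m + 1)`; finally `c ≤ 2` since `m ≥ 1`.
-/

open Matrix

/-- The ℓ²→ℓ² operator norm of a real square matrix. -/
noncomputable def l2OpNorm {n : ℕ} (M : Matrix (Fin n) (Fin n) ℝ) : ℝ :=
  ‖LinearMap.toContinuousLinearMap (Matrix.toEuclideanLin M)‖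

theorem smul_dotProduct_mulVec_smul_sub {R ι : Type*} [CommRing R] [Fintype ι]
    (A : Matrix ι ι R) (c : R) (d α : ι → R) :
    (c • d) ⬝ᵥ A *ᵥ (c • d - α) = c ^ 2 * (d ⬝ᵥ A *ᵥ d) - c * (d ⬝ᵥ A *ᵥ α) := by
  simp only [mulVec_sub, mulVec_smul, dotProduct_sub, smul_dotProduct, dotProduct_smul,
    smul_eq_mul]
  ring

theorem add_one_mul_sub_mul_rescaled_dotProduct_mulVec {K ι : Type*} [Field K] [Fintype ι]
    (A : Matrix ι ι K) (α d : ι → K) {m : K} (hm : m ≠ 0) :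
    (m + 1) * (d ⬝ᵥ A *ᵥ (d - α)) - m * ((((m + 1) / m) • d) ⬝ᵥ A *ᵥ (((m + 1) / m) • d - α))
      = -((m + 1) / m) * (d ⬝ᵥ A *ᵥ d) := by
  rw [smul_dotProduct_mulVec_smul_sub, mulVec_sub, dotProduct_sub]
  field_simp
  ring

theorem dotProduct_self_le_card_mul_sq {ι : Type*} [Fintype ι] {d : ι → ℝ} {r : ℝ}
    (hd : ∀ i, |d i| ≤ r) : d ⬝ᵥ d ≤ Fintype.card ι * r ^ 2 := by
  calc d ⬝ᵥ d = ∑ i, |d i| ^ 2 := by simp [dotProduct, sq]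
    _ ≤ ∑ _i : ι, r ^ 2 := by
      gcongr with i
      exact hd i
    _ = Fintype.card ι * r ^ 2 := by simp

theorem abs_dotProduct_mulVec_le {n : ℕ} (A : Matrix (Fin n) (Fin n) ℝ) (d : Fin n → ℝ) :
    |d ⬝ᵥ A *ᵥ d| ≤ l2OpNorm A * (d ⬝ᵥ d) := by
  set x : EuclideanSpace ℝ (Fin n) := WithLp.toLp 2 d
  set T := LinearMap.toContinuousLinearMap (toEuclideanLin A)
  have hquad : d ⬝ᵥ A *ᵥ d = inner ℝ x (T x) := by
    simp [x, T, EuclideanSpace.inner_toLp_toLp, dotProduct_comm]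
  have hnorm : d ⬝ᵥ d = ‖x‖ ^ 2 := by
    rw [← real_inner_self_eq_norm_sq, EuclideanSpace.inner_toLp_toLp, star_trivial]
  rw [hquad, hnorm]
  calc |inner ℝ x (T x)| ≤ ‖x‖ * ‖T x‖ := abs_real_inner_le_norm x (T x)
    _ ≤ ‖x‖ * (‖T‖ * ‖x‖) := by gcongr; exact T.le_opNorm x
    _ = l2OpNorm A * ‖x‖ ^ 2 := by rw [l2OpNorm]; ring

theorem stmt8_general {n : ℕ} (B : Matrix (Fin n) (Fin n) ℝ)
    (α : Fin n → ℝ) (m : ℕ) (hm : 1 ≤ m) (d : Fin n → ℝ) :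
    (((m : ℝ) + 1) * (d ⬝ᵥ B⁻¹.mulVec (d - α))
        - (m : ℝ) * (((((m : ℝ) + 1) / m) • d) ⬝ᵥ
            B⁻¹.mulVec (((((m : ℝ) + 1) / m) • d) - α))
      = -(((m : ℝ) + 1) / m) * (d ⬝ᵥ B⁻¹.mulVec d)) ∧
    (∀ ζ : ℝ, 0 ≤ ζ → (∀ i, |d i| ≤ ζ / Real.sqrt ((m : ℝ) + 1)) →
      ((m : ℝ) + 1) * (d ⬝ᵥ B⁻¹.mulVec (d - α))
          - (m : ℝ) * (((((m : ℝ) + 1) / m) • d) ⬝ᵥ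
              B⁻¹.mulVec (((((m : ℝ) + 1) / m) • d) - α))
        ≤ 2 * n * ζ ^ 2 * l2OpNorm B⁻¹ / ((m : ℝ) + 1)) := by
  have hm_pos : (0 : ℝ) < m := by exact_mod_cast hm
  rw [add_one_mul_sub_mul_rescaled_dotProduct_mulVec B⁻¹ α d hm_pos.ne']
  refine ⟨rfl, fun ζ _ hd => ?_⟩
  have hc : ((m : ℝ) + 1) / m ≤ 2 := by
    rw [div_le_iff₀ hm_pos]
    linarith [(Nat.one_le_cast (α := ℝ)).mpr hm]
  have hdd : d ⬝ᵥ d ≤ n * (ζ ^ 2 / ((m : ℝ) + 1)) := by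
    have h := dotProduct_self_le_card_mul_sq hd
    rwa [Fintype.card_fin, div_pow, Real.sq_sqrt (by positivity)] at h
  have hnorm : 0 ≤ l2OpNorm B⁻¹ := norm_nonneg _
  calc -(((m : ℝ) + 1) / m) * (d ⬝ᵥ B⁻¹ *ᵥ d)
      ≤ ((m : ℝ) + 1) / m * |d ⬝ᵥ B⁻¹ *ᵥ d| := by
        rw [neg_mul, ← mul_neg]
        gcongr
        exact neg_le_abs _
    _ ≤ 2 * (l2OpNorm B⁻¹ * (n * (ζ ^ 2 / ((m : ℝ) + 1)))) := by
        gcongr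
        exact (abs_dotProduct_mulVec_le B⁻¹ d).trans (by gcongr)
    _ = 2 * n * ζ ^ 2 * l2OpNorm B⁻¹ / ((m : ℝ) + 1) := by ring

/-- **Per-period loss of the boundary-attraction rounding step.** For
`r(d) = ⟨d, B⁻¹(d − α)⟩` and every `m ≥ 1`, the exact identity
`(m+1)·r(d) − m·r(((m+1)/m)·d) = −((m+1)/m)·⟨d, B⁻¹d⟩` holds; consequently if
`ζ ≥ 0` and `‖d‖_∞ ≤ ζ/√(m+1)` then this quantity is at most
`2nζ²‖B⁻¹‖₂/(m+1)`. -/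
theorem stmt8 {n : ℕ} (B : Matrix (Fin n) (Fin n) ℝ) (hB : IsUnit B)
    (α : Fin n → ℝ) (m : ℕ) (hm : 1 ≤ m) (d : Fin n → ℝ) :
    (((m : ℝ) + 1) * (d ⬝ᵥ B⁻¹.mulVec (d - α))
        - (m : ℝ) * (((((m : ℝ) + 1) / m) • d) ⬝ᵥ
            B⁻¹.mulVec (((((m : ℝ) + 1) / m) • d) - α))
      = -(((m : ℝ) + 1) / m) * (d ⬝ᵥ B⁻¹.mulVec d)) ∧
    (∀ ζ : ℝ, 0 ≤ ζ → (∀ i, |d i| ≤ ζ / Real.sqrt ((m : ℝ) + 1)) →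
      ((m : ℝ) + 1) * (d ⬝ᵥ B⁻¹.mulVec (d - α))
          - (m : ℝ) * (((((m : ℝ) + 1) / m) • d) ⬝ᵥ
              B⁻¹.mulVec (((((m : ℝ) + 1) / m) • d) - α))
        ≤ 2 * n * ζ ^ 2 * l2OpNorm B⁻¹ / ((m : ℝ) + 1)) :=
  stmt8_general B α m hm d
end
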